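/- Let U ⊆ ℂⁿ be open, and let u₁, …, u_m be holomorphic functions on U, not all identically zero. Set φ = log(|u₁|² + ⋯ + |u_m|²) and let ψ = log(|v₁|² + ⋯ + |v_r|²) for holomorphic functions v₁, …, v_r generating the same ideal sheaf as u₁, …, u_m. Then for every c > 0, a holomorphic function h on U satisfies local integrability of |h|²e^{−cφ} at a point if and only if |h|²e^{−cψ} is locally integrable at that point. -/
import Mathlib


open MeasureTheory

/-- Elementary real inequality used for comparing log weights. -/
lemma stmt_17_real_key {s t A c : ℝ} (hc : 0 < c) (hA : 1 ≤ A) (hs : 0 ≤ s) (ht : 0 ≤ t)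
    (hle : s ≤ A * t) (hst : s = 0 → t = 0) :
    Real.exp (-(c * Real.log t)) ≤ A ^ c * Real.exp (-(c * Real.log s)) := by
  have hAc : (1 : ℝ) ≤ A ^ c := Real.one_le_rpow hA hc.le
  rcases eq_or_lt_of_le hs with hs0 | hs0
  · have ht0 : t = 0 := hst hs0.symm
    rw [← hs0, ht0]
    simp only [Real.log_zero, mul_zero, neg_zero, Real.exp_zero, mul_one]
    exact hAc
  · have ht0 : 0 < t := by
      rcases eq_or_lt_of_le ht with ht0 | ht0
      · exfalso; rw [← ht0, mul_zero] at hle; linarith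
      · exact ht0
    have e1 : Real.exp (-(c * Real.log t)) = t ^ (-c) := by
      rw [Real.rpow_def_of_pos ht0]; ring_nf
    have e2 : Real.exp (-(c * Real.log s)) = s ^ (-c) := by
      rw [Real.rpow_def_of_pos hs0]; ring_nf
    rw [e1, e2, Real.rpow_neg ht, Real.rpow_neg hs]
    have h1 : 0 < t ^ c := Real.rpow_pos_of_pos ht0 c
    have h2 : 0 < s ^ c := Real.rpow_pos_of_pos hs0 c
    have h3 : s ^ c ≤ A ^ c * t ^ c := by
      calc s ^ c ≤ (A * t) ^ c := Real.rpow_le_rpow hs hle hc.le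
        _ = A ^ c * t ^ c := Real.mul_rpow (by linarith) ht
    rw [← div_eq_mul_inv, ← one_div, div_le_div_iff₀ h1 h2]
    linarith

lemma stmt_17_aux {n m r : ℕ} {U : Set (Fin n → ℂ)}
    {v : Fin r → (Fin n → ℂ) → ℂ}
    (hv : ∀ j, ContinuousOn (v j) U)
    {u : Fin m → (Fin n → ℂ) → ℂ}
    {h : (Fin n → ℂ) → ℂ} (hh : ContinuousOn h U)
    {c : ℝ} (hc : 0 < c)
    {z : Fin n → ℂ}
    {V₀ : Set (Fin n → ℂ)} (hV₀ : IsOpen V₀) (hzV₀ : z ∈ V₀) (hV₀U : V₀ ⊆ U)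
    {a : Fin m → Fin r → (Fin n → ℂ) → ℂ}
    (ha : ∀ i j, ContinuousOn (a i j) V₀)
    (hau : ∀ w ∈ V₀, ∀ i, u i w = ∑ j, a i j w * v j w)
    {b : Fin r → Fin m → (Fin n → ℂ) → ℂ}
    (hbv : ∀ w ∈ V₀, ∀ j, v j w = ∑ i, b j i w * u i w)
    (H : ∃ V ∈ nhds z, IntegrableOn
        (fun w => ‖h w‖ ^ 2 * Real.exp (-(c * Real.log (∑ i, ‖u i w‖ ^ 2)))) V volume) :
    ∃ V ∈ nhds z, IntegrableOn
        (fun w => ‖h w‖ ^ 2 * Real.exp (-(c * Real.log (∑ j, ‖v j w‖ ^ 2)))) V volume := by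
  obtain ⟨V₁, hV₁, hint⟩ := H
  obtain ⟨ε, hε, hball⟩ := Metric.mem_nhds_iff.mp (Filter.inter_mem (hV₀.mem_nhds hzV₀) hV₁)
  set K := Metric.closedBall z (ε / 2) with hK
  have hKball : K ⊆ Metric.ball z ε := Metric.closedBall_subset_ball (by linarith)
  have hKV₀ : K ⊆ V₀ := fun w hw => (hball (hKball hw)).1
  have hKV₁ : K ⊆ V₁ := fun w hw => (hball (hKball hw)).2
  -- bound for the coefficients
  have hg : ContinuousOn (fun w => ∑ i, ∑ j, ‖a i j w‖ ^ 2) V₀ := by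
    apply continuousOn_finset_sum
    intro i _
    apply continuousOn_finset_sum
    intro j _
    exact ((ha i j).norm.pow 2)
  obtain ⟨M, hM⟩ := (isCompact_closedBall z (ε / 2)).exists_bound_of_continuousOn
    (hg.mono hKV₀)
  set A : ℝ := max 1 M with hA
  have hA1 : (1 : ℝ) ≤ A := le_max_left _ _
  -- key comparison on K
  have hcomp : ∀ w ∈ K, (∑ i, ‖u i w‖ ^ 2) ≤ A * ∑ j, ‖v j w‖ ^ 2 := by
    intro w hw
    have hwV₀ := hKV₀ hw
    have h1 : ∀ i, ‖u i w‖ ^ 2 ≤ (∑ j, ‖a i j w‖ ^ 2) * ∑ j, ‖v j w‖ ^ 2 := by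
      intro i
      have h2 : ‖u i w‖ ≤ ∑ j, ‖a i j w‖ * ‖v j w‖ := by
        rw [hau w hwV₀ i]
        refine (norm_sum_le _ _).trans ?_
        apply Finset.sum_le_sum
        intro j _
        rw [norm_mul]
      calc ‖u i w‖ ^ 2 ≤ (∑ j, ‖a i j w‖ * ‖v j w‖) ^ 2 := by
            apply pow_le_pow_left₀ (norm_nonneg _) h2
        _ ≤ (∑ j, ‖a i j w‖ ^ 2) * ∑ j, ‖v j w‖ ^ 2 :=
            Finset.sum_mul_sq_le_sq_mul_sq _ _ _
    calc (∑ i, ‖u i w‖ ^ 2) ≤ ∑ i, (∑ j, ‖a i j w‖ ^ 2) * ∑ j, ‖v j w‖ ^ 2 :=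
          Finset.sum_le_sum fun i _ => h1 i
      _ = (∑ i, ∑ j, ‖a i j w‖ ^ 2) * ∑ j, ‖v j w‖ ^ 2 := by rw [Finset.sum_mul]
      _ ≤ A * ∑ j, ‖v j w‖ ^ 2 := by
          apply mul_le_mul_of_nonneg_right _ (by positivity)
          refine le_trans ?_ (le_max_right 1 M)
          exact le_trans (le_abs_self _) (hM w hw)
  -- zero sets
  have hzero : ∀ w ∈ K, (∑ i, ‖u i w‖ ^ 2) = 0 → (∑ j, ‖v j w‖ ^ 2) = 0 := by
    intro w hw h0
    have hu0 : ∀ i, u i w = 0 := by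
      intro i
      have := (Finset.sum_eq_zero_iff_of_nonneg
        (fun i _ => by positivity)).mp h0 i (Finset.mem_univ i)
      simpa [pow_eq_zero_iff] using this
    apply Finset.sum_eq_zero
    intro j _
    rw [hbv w (hKV₀ hw) j]
    simp [hu0]
  -- pointwise bound
  have hpt : ∀ w ∈ K,
      ‖h w‖ ^ 2 * Real.exp (-(c * Real.log (∑ j, ‖v j w‖ ^ 2))) ≤
      A ^ c * (‖h w‖ ^ 2 * Real.exp (-(c * Real.log (∑ i, ‖u i w‖ ^ 2)))) := by
    intro w hw
    have := stmt_17_real_key hc hA1 (by positivity) (by positivity)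
      (hcomp w hw) (hzero w hw)
    calc ‖h w‖ ^ 2 * Real.exp (-(c * Real.log (∑ j, ‖v j w‖ ^ 2)))
        ≤ ‖h w‖ ^ 2 * (A ^ c * Real.exp (-(c * Real.log (∑ i, ‖u i w‖ ^ 2)))) :=
          mul_le_mul_of_nonneg_left this (by positivity)
      _ = A ^ c * (‖h w‖ ^ 2 * Real.exp (-(c * Real.log (∑ i, ‖u i w‖ ^ 2)))) := by ring
  -- conclude on the open ball
  set W := Metric.ball z (ε / 2) with hW
  have hWK : W ⊆ K := Metric.ball_subset_closedBall
  have hWU : W ⊆ U := fun w hw => hV₀U (hKV₀ (hWK hw))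
  have hWm : MeasurableSet W := measurableSet_ball
  refine ⟨W, Metric.ball_mem_nhds z (by linarith), ?_⟩
  have hgint : IntegrableOn
      (fun w => A ^ c * (‖h w‖ ^ 2 * Real.exp (-(c * Real.log (∑ i, ‖u i w‖ ^ 2))))) W volume :=
    (hint.mono_set fun w hw => hKV₁ (hWK hw)).const_mul _
  apply Integrable.mono' hgint
  · have hsum : AEMeasurable (fun w => ∑ j, ‖v j w‖ ^ 2) (volume.restrict W) := by
      apply ContinuousOn.aemeasurable _ hWm
      apply continuousOn_finset_sum
      intro j _
      exact ((hv j).mono hWU).norm.pow 2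
    have h3 : AEMeasurable (fun w => Real.exp (-(c * Real.log (∑ j, ‖v j w‖ ^ 2))))
        (volume.restrict W) := by
      exact Real.measurable_exp.comp_aemeasurable
        (((Real.measurable_log.comp_aemeasurable hsum).const_mul c).neg)
    have h4 : AEMeasurable (fun w => ‖h w‖ ^ 2) (volume.restrict W) :=
      ContinuousOn.aemeasurable (((hh.mono hWU).norm.pow 2)) hWm
    exact (h4.mul h3).aestronglyMeasurable
  · apply ae_restrict_of_forall_mem hWm
    intro w hw
    rw [Real.norm_eq_abs, abs_of_nonneg (by positivity)]
    exact hpt w (hWK hw)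

/-- Well-definedness of multiplier ideals of logarithmic weights: if the
holomorphic tuples `u₁,…,u_m` (not all identically zero) and `v₁,…,v_r`
generate the same ideal sheaf on an open set `U ⊆ ℂⁿ` (locally each `uᵢ` is a
holomorphic combination of the `vⱼ`'s and vice versa), and
`φ = log(|u₁|²+⋯+|u_m|²)`, `ψ = log(|v₁|²+⋯+|v_r|²)`, then for every `c > 0`
and every holomorphic `h` on `U`, `|h|²e^{−cφ}` is locally integrable at a
point of `U` iff `|h|²e^{−cψ}` is. -/
theorem stmt_17 (n m r : ℕ) (U : Set (Fin n → ℂ)) (hU : IsOpen U)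
    (u : Fin m → (Fin n → ℂ) → ℂ) (v : Fin r → (Fin n → ℂ) → ℂ)
    (hu : ∀ i, DifferentiableOn ℂ (u i) U)
    (hv : ∀ j, DifferentiableOn ℂ (v j) U)
    (hu0 : ∃ z ∈ U, ∃ i, u i z ≠ 0)
    (hsame : ∀ z ∈ U, ∃ V : Set (Fin n → ℂ), IsOpen V ∧ z ∈ V ∧ V ⊆ U ∧
      (∃ a : Fin m → Fin r → (Fin n → ℂ) → ℂ,
        (∀ i j, DifferentiableOn ℂ (a i j) V) ∧
        ∀ w ∈ V, ∀ i, u i w = ∑ j, a i j w * v j w) ∧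
      (∃ b : Fin r → Fin m → (Fin n → ℂ) → ℂ,
        (∀ j i, DifferentiableOn ℂ (b j i) V) ∧
        ∀ w ∈ V, ∀ j, v j w = ∑ i, b j i w * u i w))
    (φ ψ : (Fin n → ℂ) → ℝ)
    (hφ : ∀ z, φ z = Real.log (∑ i, ‖u i z‖ ^ 2))
    (hψ : ∀ z, ψ z = Real.log (∑ j, ‖v j z‖ ^ 2))
    (c : ℝ) (hc : 0 < c)
    (h : (Fin n → ℂ) → ℂ) (hh : DifferentiableOn ℂ h U)
    (z : Fin n → ℂ) (hz : z ∈ U) :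
    (∃ V ∈ nhds z, IntegrableOn
        (fun w => ‖h w‖ ^ 2 * Real.exp (-(c * φ w))) V volume) ↔
    (∃ V ∈ nhds z, IntegrableOn
        (fun w => ‖h w‖ ^ 2 * Real.exp (-(c * ψ w))) V volume) := by
  obtain ⟨V₀, hV₀, hzV₀, hV₀U, ⟨a, ha, hau⟩, ⟨b, hb, hbv⟩⟩ := hsame z hz
  simp only [hφ, hψ]
  constructor
  · intro H
    exact stmt_17_aux (fun j => (hv j).continuousOn) hh.continuousOn hc hV₀ hzV₀ hV₀U
      (fun i j => (ha i j).continuousOn) hau hbv H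
  · intro H
    exact stmt_17_aux (fun i => (hu i).continuousOn) hh.continuousOn hc hV₀ hzV₀ hV₀U
      (fun j i => (hb j i).continuousOn) hbv hau H
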